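/- arXiv:1208.5822 — 4 statements merged into one kernel-verified Lean document; each statement's English description precedes it below -/
import Mathlib

section
/- If u ∈ V, then for every y in [ε, Λ] one has u(y)/(y + u(y)²) ≥ w(y)/(y + w(y)²), and consequently Au(x) ≥ Aw(x) for every x in [ε, Λ]. -/
open Real Set MeasureTheory intervalIntegral

/-- The function `w(x) = (4ε/λ)·√(ε/(Λx))`. -/
noncomputable def wfun (lam ε Λ : ℝ) (x : ℝ) : ℝ :=
  (4 * ε / lam) * Real.sqrt (ε / (Λ * x))

/-- The nonlinear integral operator `A`. -/
noncomputable def opA (lam ε Λ : ℝ) (u : ℝ → ℝ) (x : ℝ) : ℝ :=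
  (lam / 2) * ∫ y in ε..Λ, (1 / (y + x + |y - x|)) * (y * u y / (y + (u y) ^ 2))

/-- Membership in the set `V`: continuous on `[ε,Λ]` and `w(x) ≤ u(x) ≤ (λ/4)√Λ` there. -/
def memV (lam ε Λ : ℝ) (u : ℝ → ℝ) : Prop :=
  ContinuousOn u (Set.Icc ε Λ) ∧
    ∀ x ∈ Set.Icc ε Λ, wfun lam ε Λ x ≤ u x ∧ u x ≤ (lam / 4) * Real.sqrt Λ


/-!
For `y > 0`, `f(t) = t / (y + t²)` satisfies `f(a) ≤ f(b)` whenever `a ≤ b` and `a b ≤ y`,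
since the difference of the cross products is `(b - a)(y - a b)`. For `u ∈ V` we have
`w(y) ≤ u(y)` and `u(y) w(y) ≤ (λ/4)√Λ · w(y) = ε √(ε/y) ≤ y`, which gives the pointwise
inequality; integrating it against the nonnegative kernel `y / (y + x + |y - x|)` gives `Aw ≤ Au`.
-/

theorem div_add_sq_le_div_add_sq {y a b : ℝ} (hy : 0 < y) (hab : a ≤ b) (hba : a * b ≤ y) :
    a / (y + a ^ 2) ≤ b / (y + b ^ 2) := by
  rw [div_le_div_iff₀ (by positivity) (by positivity)]
  nlinarith [mul_nonneg (sub_nonneg.mpr hab) (sub_nonneg.mpr hba)]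

theorem wfun_nonneg {lam ε : ℝ} (Λ x : ℝ) (hlam : 0 ≤ lam) (hε : 0 ≤ ε) :
    0 ≤ wfun lam ε Λ x := by
  unfold wfun; positivity

theorem div_mul_sqrt_mul_wfun {lam ε Λ : ℝ} (x : ℝ) (hlam : lam ≠ 0) (hΛ : 0 < Λ) :
    lam / 4 * √Λ * wfun lam ε Λ x = ε * √(ε / x) := by
  calc lam / 4 * √Λ * wfun lam ε Λ x = ε * (lam / lam) * (√Λ * √(ε / (Λ * x))) := by
        rw [wfun]; ring
    _ = ε * √(ε / x) := by
        rw [div_self hlam, mul_one, ← sqrt_mul hΛ.le, mul_div_assoc',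
          mul_div_mul_left _ _ hΛ.ne']

theorem continuousOn_wfun (lam ε : ℝ) {Λ : ℝ} (hΛ : Λ ≠ 0) :
    ContinuousOn (wfun lam ε Λ) (Ioi 0) := by
  unfold wfun
  fun_prop (disch := intro x (hx : 0 < x); exact mul_ne_zero hΛ hx.ne')

theorem memV.wfun_div_le {lam ε Λ y : ℝ} {u : ℝ → ℝ} (hu : memV lam ε Λ u) (hlam : 0 < lam)
    (hε : 0 < ε) (hy : y ∈ Icc ε Λ) :
    wfun lam ε Λ y / (y + wfun lam ε Λ y ^ 2) ≤ u y / (y + u y ^ 2) := by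
  obtain ⟨hwu, hub⟩ := hu.2 y hy
  have hy0 : 0 < y := hε.trans_le hy.1
  have hsqrt : √(ε / y) ≤ 1 := sqrt_le_one.mpr ((div_le_one hy0).mpr hy.1)
  refine div_add_sq_le_div_add_sq hy0 hwu ?_
  calc wfun lam ε Λ y * u y ≤ wfun lam ε Λ y * (lam / 4 * √Λ) :=
        mul_le_mul_of_nonneg_left hub (wfun_nonneg _ _ hlam.le hε.le)
    _ = ε * √(ε / y) := by rw [mul_comm, div_mul_sqrt_mul_wfun y hlam.ne' (hy0.trans_le hy.2)]
    _ ≤ y := by nlinarith [sqrt_nonneg (ε / y), hy.1]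

theorem intervalIntegrable_opA_integrand {ε Λ x : ℝ} {v : ℝ → ℝ} (hε : 0 < ε) (hεΛ : ε ≤ Λ)
    (hx : 0 < x) (hv : ContinuousOn v (Icc ε Λ)) :
    IntervalIntegrable (fun y => 1 / (y + x + |y - x|) * (y * v y / (y + v y ^ 2))) volume ε Λ := by
  refine ContinuousOn.intervalIntegrable_of_Icc hεΛ ?_
  fun_prop (disch := intro y (hy : y ∈ Icc ε Λ); have := hε.trans_le hy.1; positivity)

theorem opA_mono {lam ε Λ x : ℝ} {v₁ v₂ : ℝ → ℝ} (hlam : 0 ≤ lam) (hε : 0 < ε) (hεΛ : ε ≤ Λ)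
    (hx : 0 < x) (hv₁ : ContinuousOn v₁ (Icc ε Λ)) (hv₂ : ContinuousOn v₂ (Icc ε Λ))
    (h : ∀ y ∈ Icc ε Λ, v₁ y / (y + v₁ y ^ 2) ≤ v₂ y / (y + v₂ y ^ 2)) :
    opA lam ε Λ v₁ x ≤ opA lam ε Λ v₂ x := by
  refine mul_le_mul_of_nonneg_left ?_ (by positivity)
  refine integral_mono_on hεΛ (intervalIntegrable_opA_integrand hε hεΛ hx hv₁)
    (intervalIntegrable_opA_integrand hε hεΛ hx hv₂) fun y hy => ?_
  have hy0 : 0 < y := hε.trans_le hy.1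
  have hkernel : 0 ≤ 1 / (y + x + |y - x|) := by positivity
  simp only [mul_div_assoc]
  exact mul_le_mul_of_nonneg_left (mul_le_mul_of_nonneg_left (h y hy) hy0.le) hkernel

theorem stmt_2_general (ε Λ lam : ℝ) (hε : 0 < ε) (hεΛ : ε < Λ) (hlam : 2 < lam)
    (u : ℝ → ℝ) (hu : memV lam ε Λ u) :
    (∀ y ∈ Set.Icc ε Λ,
        wfun lam ε Λ y / (y + (wfun lam ε Λ y) ^ 2) ≤ u y / (y + (u y) ^ 2)) ∧
      ∀ x ∈ Set.Icc ε Λ, opA lam ε Λ (wfun lam ε Λ) x ≤ opA lam ε Λ u x := by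
  have hlam0 : 0 < lam := by linarith
  have hw : ContinuousOn (wfun lam ε Λ) (Icc ε Λ) :=
    (continuousOn_wfun lam ε (hε.trans hεΛ).ne').mono fun y hy => hε.trans_le hy.1
  have hpointwise := fun y (hy : y ∈ Icc ε Λ) => hu.wfun_div_le hlam0 hε hy
  exact ⟨hpointwise, fun x hx =>
    opA_mono hlam0.le hε hεΛ.le (hε.trans_le hx.1) hw hu.1 hpointwise⟩

theorem stmt_2 (ε Λ lam : ℝ) (hε : 0 < ε) (hεΛ : ε < Λ) (hlam : 2 < lam)
    (hratio : ε / Λ ≤ min (1 / 16)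
      (((Real.sqrt (lam ^ 2 + 128 * (lam - 2)) - lam) / 64) ^ 2))
    (u : ℝ → ℝ) (hu : memV lam ε Λ u) :
    (∀ y ∈ Set.Icc ε Λ,
        wfun lam ε Λ y / (y + (wfun lam ε Λ y) ^ 2) ≤ u y / (y + (u y) ^ 2)) ∧
      ∀ x ∈ Set.Icc ε Λ, opA lam ε Λ (wfun lam ε Λ) x ≤ opA lam ε Λ u x :=
  stmt_2_general ε Λ lam hε hεΛ hlam u hu
end

section
/- For every x in [ε,Λ] one has ∫_ε^Λ 1/(y + x + |y − x|) dy ≤ (1/2)·(1 + ln(Λ/ε)). -/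
open Real Set MeasureTheory intervalIntegral

/-!
The denominator is `2 * max y x`. On `[ε, x]` the integrand is the constant `1 / (2x)`,
contributing `(x - ε) / (2x) ≤ 1/2`; on `[x, Λ]` it is `1 / (2y)`, contributing
`log (Λ / x) / 2 ≤ log (Λ / ε) / 2`.
-/

theorem add_add_abs_sub_eq_two_mul_max (y x : ℝ) : y + x + |y - x| = 2 * max y x := by
  rw [abs_sub_comm, ← two_nsmul_sup_eq_add_add_abs_sub, two_nsmul, two_mul]

theorem integral_inv_max_eq {a b x : ℝ} (ha : 0 < a) (hax : a ≤ x) (hxb : x ≤ b) :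
    ∫ y in a..b, (max y x)⁻¹ = (x - a) / x + log (b / x) := by
  have hx : 0 < x := ha.trans_le hax
  have hint : ∀ c d, IntervalIntegrable (fun y => (max y x)⁻¹) volume c d := fun c d =>
    (continuous_id.max continuous_const |>.inv₀ fun y =>
      (hx.trans_le (le_max_right y x)).ne').intervalIntegrable c d
  have hleft : ∫ y in a..x, (max y x)⁻¹ = (x - a) / x := by
    rw [integral_congr (g := fun _ => x⁻¹), intervalIntegral.integral_const, smul_eq_mul,
      div_eq_mul_inv]
    intro y hy
    rw [uIcc_of_le hax] at hy
    simp only [max_eq_right hy.2]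
  have hright : ∫ y in x..b, (max y x)⁻¹ = log (b / x) := by
    rw [integral_congr (g := fun y => y⁻¹), integral_inv_of_pos hx (hx.trans_le hxb)]
    intro y hy
    rw [uIcc_of_le hxb] at hy
    simp only [max_eq_left hy.1]
  rw [← integral_add_adjacent_intervals (hint a x) (hint x b), hleft, hright]

theorem integral_inv_max_le {a b x : ℝ} (ha : 0 < a) (hax : a ≤ x) (hxb : x ≤ b) :
    ∫ y in a..b, (max y x)⁻¹ ≤ 1 + log (b / a) := by
  have hx : 0 < x := ha.trans_le hax
  rw [integral_inv_max_eq ha hax hxb]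
  gcongr
  · rw [div_le_one hx]; linarith
  · exact div_pos (hx.trans_le hxb) hx
  · linarith

theorem stmt_8_general (ε Λ : ℝ) (hε : 0 < ε) (x : ℝ) (hx : x ∈ Set.Icc ε Λ) :
    (∫ y in ε..Λ, 1 / (y + x + |y - x|)) ≤ (1 / 2) * (1 + Real.log (Λ / ε)) := by
  simp_rw [add_add_abs_sub_eq_two_mul_max, one_div, mul_inv]
  rw [intervalIntegral.integral_const_mul]
  gcongr
  exact integral_inv_max_le hε hx.1 hx.2

theorem stmt_8 (ε Λ : ℝ) (hε : 0 < ε) (hεΛ : ε < Λ) (x : ℝ) (hx : x ∈ Set.Icc ε Λ) :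
    (∫ y in ε..Λ, 1 / (y + x + |y - x|)) ≤ (1 / 2) * (1 + Real.log (Λ / ε)) :=
  stmt_8_general ε Λ hε x hx
end

section
/- Let u₀ ∈ V be a fixed point of A (Au₀ = u₀). Then u₀ is differentiable on [ε,Λ] with u₀'(x) = −(λ/(4x²))·∫_ε^x [y·u₀(y)/(y + u₀(y)²)] dy for all x ∈ [ε,Λ]; in particular u₀'(ε) = 0 and u₀'(x) < 0 for all x ∈ (ε,Λ]. -/
open Real Set MeasureTheory intervalIntegral

/-!
Since `y + x + |y - x| = 2 max x y`, splitting the integral defining `A u` at `x` gives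
`A u (x) = (λ/4) (x⁻¹ ∫_ε^x f + ∫_x^Λ f(y)/y dy)` with `f(y) = y u(y)/(y + u(y)²)`.
Differentiating, the two terms `± f(x)/x` coming from the fundamental theorem of calculus
cancel, leaving `-(λ/(4x²)) ∫_ε^x f`, which is negative for `x > ε` because `f > 0` on `[ε,Λ]`.
-/

section

variable {f : ℝ → ℝ} {a b x : ℝ}

theorem ContinuousOn.hasDerivWithinAt_integral_Icc_right (hf : ContinuousOn f (Icc a b))
    (hx : x ∈ Icc a b) :
    HasDerivWithinAt (fun t => ∫ y in a..t, f y) (f x) (Icc a b) x := by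
  have := Fact.mk hx -- provides the `FTCFilter` instance for `𝓝[Icc a b] x`
  exact integral_hasDerivWithinAt_right
    ((hf.mono (Icc_subset_Icc le_rfl hx.2)).intervalIntegrable_of_Icc hx.1)
    (hf.stronglyMeasurableAtFilter_nhdsWithin measurableSet_Icc x) (hf x hx)

theorem ContinuousOn.hasDerivWithinAt_integral_Icc_left (hf : ContinuousOn f (Icc a b))
    (hx : x ∈ Icc a b) :
    HasDerivWithinAt (fun t => ∫ y in t..b, f y) (-f x) (Icc a b) x := by
  have := Fact.mk hx
  exact integral_hasDerivWithinAt_left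
    ((hf.mono (Icc_subset_Icc hx.1 le_rfl)).intervalIntegrable_of_Icc hx.2)
    (hf.stronglyMeasurableAtFilter_nhdsWithin measurableSet_Icc x) (hf x hx)

theorem integral_one_div_add_add_abs_sub_mul (hf : ContinuousOn f (Icc a b)) (hx : x ∈ Icc a b)
    (hx0 : 0 < x) :
    ∫ y in a..b, 1 / (y + x + |y - x|) * f y =
      (2 * x)⁻¹ * (∫ y in a..x, f y) + 2⁻¹ * ∫ y in x..b, f y / y := by
  have hden : ∀ y, 0 < y + x + |y - x| := fun y => by linarith [neg_le_abs (y - x)]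
  have hk : ContinuousOn (fun y => 1 / (y + x + |y - x|) * f y) (Icc a b) :=
    (continuousOn_const.div (by fun_prop) fun y _ => (hden y).ne').mul hf
  rw [← integral_add_adjacent_intervals
      ((hk.mono (Icc_subset_Icc le_rfl hx.2)).intervalIntegrable_of_Icc hx.1)
      ((hk.mono (Icc_subset_Icc hx.1 le_rfl)).intervalIntegrable_of_Icc hx.2),
    ← intervalIntegral.integral_const_mul, ← intervalIntegral.integral_const_mul]
  congr 1
  · refine integral_congr fun y hy => ?_
    rw [uIcc_of_le hx.1] at hy
    simp only [abs_of_nonpos (sub_nonpos.2 hy.2)]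
    ring_nf
  · refine integral_congr fun y hy => ?_
    rw [uIcc_of_le hx.2] at hy
    simp only [abs_of_nonneg (sub_nonneg.2 hy.1)]
    have hy0 : y ≠ 0 := (hx0.trans_le hy.1).ne'
    rw [show y + x + (y - x) = 2 * y by ring]
    field_simp

theorem hasDerivWithinAt_inv_mul_integral_add_integral_div (hf : ContinuousOn f (Icc a b))
    (ha : 0 < a) (hx : x ∈ Icc a b) :
    HasDerivWithinAt (fun t => t⁻¹ * (∫ y in a..t, f y) + ∫ y in t..b, f y / y)
      (-(x ^ 2)⁻¹ * ∫ y in a..x, f y) (Icc a b) x := by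
  have hx0 : x ≠ 0 := (ha.trans_le hx.1).ne'
  have hf_div : ContinuousOn (fun y => f y / y) (Icc a b) :=
    hf.div continuousOn_id fun y hy => (ha.trans_le hy.1).ne'
  refine (((hasDerivAt_inv hx0).hasDerivWithinAt.fun_mul
    (hf.hasDerivWithinAt_integral_Icc_right hx)).fun_add
    (hf_div.hasDerivWithinAt_integral_Icc_left hx)).congr_deriv ?_
  field_simp
  ring

end

theorem wfun_pos {lam ε Λ x : ℝ} (hlam : 0 < lam) (hε : 0 < ε) (hΛ : 0 < Λ) (hx : 0 < x) :
    0 < wfun lam ε Λ x := by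
  unfold wfun
  have : 0 < ε / (Λ * x) := by positivity
  positivity

theorem opA_eq {lam ε Λ x : ℝ} {u : ℝ → ℝ}
    (hu : ContinuousOn (fun y => y * u y / (y + u y ^ 2)) (Icc ε Λ)) (hx : x ∈ Icc ε Λ)
    (hx0 : 0 < x) :
    opA lam ε Λ u x = lam / 4 * (x⁻¹ * (∫ y in ε..x, y * u y / (y + u y ^ 2)) +
      ∫ y in x..Λ, y * u y / (y + u y ^ 2) / y) := by
  rw [opA, integral_one_div_add_add_abs_sub_mul hu hx hx0]
  ring

theorem stmt_10_general (ε Λ lam : ℝ) (hε : 0 < ε) (hεΛ : ε < Λ) (hlam : 2 < lam)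
    (u₀ : ℝ → ℝ) (hu₀ : memV lam ε Λ u₀)
    (hfix : ∀ x ∈ Set.Icc ε Λ, u₀ x = opA lam ε Λ u₀ x) :
    ∃ u₀' : ℝ → ℝ,
      (∀ x ∈ Set.Icc ε Λ, HasDerivWithinAt u₀ (u₀' x) (Set.Icc ε Λ) x) ∧
      (∀ x ∈ Set.Icc ε Λ,
        u₀' x = -(lam / (4 * x ^ 2)) * ∫ y in ε..x, y * u₀ y / (y + (u₀ y) ^ 2)) ∧
      u₀' ε = 0 ∧
      ∀ x ∈ Set.Ioc ε Λ, u₀' x < 0 := by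
  obtain ⟨hcont, hbound⟩ := hu₀
  have hlam0 : 0 < lam := two_pos.trans hlam
  set f : ℝ → ℝ := fun y => y * u₀ y / (y + u₀ y ^ 2)
  have hf_pos : ∀ y ∈ Icc ε Λ, 0 < f y := fun y hy => by
    have hy0 : 0 < y := hε.trans_le hy.1
    have : 0 < u₀ y := (wfun_pos hlam0 hε (hε.trans hεΛ) hy0).trans_le (hbound y hy).1
    positivity
  have hf : ContinuousOn f (Icc ε Λ) :=
    (continuousOn_id.mul hcont).div (continuousOn_id.add (hcont.pow 2))
      fun y hy => (add_pos_of_pos_of_nonneg (hε.trans_le hy.1) (sq_nonneg _)).ne'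
  refine ⟨fun x => -(lam / (4 * x ^ 2)) * ∫ y in ε..x, f y, fun x hx => ?_, fun _ _ => rfl,
    by simp, fun x hx => ?_⟩
  · have hu₀_eq : EqOn u₀ (fun t => lam / 4 * (t⁻¹ * (∫ y in ε..t, f y) + ∫ y in t..Λ, f y / y))
        (Icc ε Λ) := fun t ht => (hfix t ht).trans (opA_eq hf ht (hε.trans_le ht.1))
    refine (((hasDerivWithinAt_inv_mul_integral_add_integral_div hf hε hx).const_mul
      (lam / 4)).congr_of_mem hu₀_eq hx).congr_deriv ?_
    field_simp
  · have hF : 0 < ∫ y in ε..x, f y :=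
      intervalIntegral_pos_of_pos_on
        ((hf.mono (Icc_subset_Icc le_rfl hx.2)).intervalIntegrable_of_Icc hx.1.le)
        (fun y hy => hf_pos y ⟨hy.1.le, hy.2.le.trans hx.2⟩) hx.1
    have : 0 < lam / (4 * x ^ 2) := by have := hε.trans hx.1; positivity
    exact mul_neg_of_neg_of_pos (neg_neg_of_pos this) hF

theorem stmt_10 (ε Λ lam : ℝ) (hε : 0 < ε) (hεΛ : ε < Λ) (hlam : 2 < lam)
    (hratio : ε / Λ ≤ min (1 / 16)
      (((Real.sqrt (lam ^ 2 + 128 * (lam - 2)) - lam) / 64) ^ 2))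
    (u₀ : ℝ → ℝ) (hu₀ : memV lam ε Λ u₀)
    (hfix : ∀ x ∈ Set.Icc ε Λ, u₀ x = opA lam ε Λ u₀ x) :
    ∃ u₀' : ℝ → ℝ,
      (∀ x ∈ Set.Icc ε Λ, HasDerivWithinAt u₀ (u₀' x) (Set.Icc ε Λ) x) ∧
      (∀ x ∈ Set.Icc ε Λ,
        u₀' x = -(lam / (4 * x ^ 2)) * ∫ y in ε..x, y * u₀ y / (y + (u₀ y) ^ 2)) ∧
      u₀' ε = 0 ∧
      ∀ x ∈ Set.Ioc ε Λ, u₀' x < 0 :=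
  stmt_10_general ε Λ lam hε hεΛ hlam u₀ hu₀ hfix
end

section
/- Let u₀ ∈ V be a fixed point of A (Au₀ = u₀). Then u₀ is twice differentiable on [ε,Λ] and satisfies the second-order differential equation x²·u₀''(x) + 2x·u₀'(x) + (λ/4)·[x·u₀(x)/(x + u₀(x)²)] = 0 for all x ∈ [ε,Λ]. -/
/-!
The kernel `1/(y + x + |y - x|) = 1/(2 max(x, y))` splits at `y = x`, so with
`g(y) = y u(y)/(y + u(y)²)` a fixed point is `u = (λ/4)·(x⁻¹ ∫_ε^x g + ∫_x^Λ g(y)/y dy)`.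
By the fundamental theorem of calculus this is twice differentiable with
`u' = -(λ/4) x⁻² ∫_ε^x g` (the two `g(x)/x` terms cancel), and `(x² u')' = -(λ/4) g` is the equation.
-/

open Real Set MeasureTheory intervalIntegral

noncomputable def greenPotential (a b : ℝ) (g : ℝ → ℝ) (x : ℝ) : ℝ :=
  (∫ y in a..x, g y) / x + ∫ y in x..b, g y / y

section GreenPotential

variable {a b x : ℝ} {g : ℝ → ℝ}

theorem integral_kernel_eq_greenPotential (ha : 0 < a) (hg : ContinuousOn g (Icc a b))
    (hx : x ∈ Icc a b) :
    ∫ y in a..b, 1 / (y + x + |y - x|) * g y = greenPotential a b g x / 2 := by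
  have hx0 : 0 < x := ha.trans_le hx.1
  have hkernel : ContinuousOn (fun y => 1 / (y + x + |y - x|) * g y) (Icc a b) := by
    refine ContinuousOn.mul (continuousOn_const.div (by fun_prop) fun y hy => ?_) hg
    have : 0 < y := ha.trans_le hy.1
    positivity
  have hleft : ∫ y in a..x, 1 / (y + x + |y - x|) * g y = ∫ y in a..x, g y / (2 * x) := by
    refine integral_congr fun y hy => ?_
    rw [uIcc_of_le hx.1] at hy
    rw [abs_of_nonpos (by linarith [hy.2]), show y + x + -(y - x) = 2 * x by ring]
    ring
  have hright : ∫ y in x..b, 1 / (y + x + |y - x|) * g y = ∫ y in x..b, g y / y / 2 := by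
    refine integral_congr fun y hy => ?_
    rw [uIcc_of_le hx.2] at hy
    rw [abs_of_nonneg (by linarith [hy.1])]
    field_simp
    ring
  rw [← integral_add_adjacent_intervals
      ((hkernel.mono (uIcc_subset_Icc ⟨le_rfl, hx.1.trans hx.2⟩ hx)).intervalIntegrable)
      ((hkernel.mono (uIcc_subset_Icc hx ⟨hx.1.trans hx.2, le_rfl⟩)).intervalIntegrable),
    hleft, hright, intervalIntegral.integral_div, intervalIntegral.integral_div, greenPotential]
  ring

theorem hasDerivWithinAt_integral_right_Icc (hg : ContinuousOn g (Icc a b)) (hx : x ∈ Icc a b) :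
    HasDerivWithinAt (fun t => ∫ y in a..t, g y) (g x) (Icc a b) x := by
  have : Fact (x ∈ Icc a b) := ⟨hx⟩
  exact integral_hasDerivWithinAt_right
    ((hg.mono (uIcc_subset_Icc ⟨le_rfl, hx.1.trans hx.2⟩ hx)).intervalIntegrable)
    (hg.stronglyMeasurableAtFilter_nhdsWithin measurableSet_Icc x) (hg x hx)

theorem hasDerivWithinAt_integral_left_Icc (hg : ContinuousOn g (Icc a b)) (hx : x ∈ Icc a b) :
    HasDerivWithinAt (fun t => ∫ y in t..b, g y) (-g x) (Icc a b) x := by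
  have : Fact (x ∈ Icc a b) := ⟨hx⟩
  exact integral_hasDerivWithinAt_left
    ((hg.mono (uIcc_subset_Icc hx ⟨hx.1.trans hx.2, le_rfl⟩)).intervalIntegrable)
    (hg.stronglyMeasurableAtFilter_nhdsWithin measurableSet_Icc x) (hg x hx)

theorem hasDerivWithinAt_greenPotential (ha : 0 < a) (hg : ContinuousOn g (Icc a b))
    (hx : x ∈ Icc a b) :
    HasDerivWithinAt (greenPotential a b g) (-(∫ y in a..x, g y) / x ^ 2) (Icc a b) x := by
  have hx0 : x ≠ 0 := (ha.trans_le hx.1).ne'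
  have hg_div : ContinuousOn (fun y => g y / y) (Icc a b) :=
    hg.div continuousOn_id fun y hy => (ha.trans_le hy.1).ne'
  refine (((hasDerivWithinAt_integral_right_Icc hg hx).div (hasDerivWithinAt_id x _) hx0).add
    (hasDerivWithinAt_integral_left_Icc hg_div hx)).congr_deriv ?_
  simp only [id]
  field_simp
  ring

theorem hasDerivWithinAt_neg_integral_div_sq (ha : 0 < a) (hg : ContinuousOn g (Icc a b))
    (hx : x ∈ Icc a b) :
    HasDerivWithinAt (fun t => -(∫ y in a..t, g y) / t ^ 2)
      (2 * (∫ y in a..x, g y) / x ^ 3 - g x / x ^ 2) (Icc a b) x := by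
  have hx0 : x ≠ 0 := (ha.trans_le hx.1).ne'
  refine ((hasDerivWithinAt_integral_right_Icc hg hx).fun_neg.div
    ((hasDerivWithinAt_id x _).fun_pow 2) (pow_ne_zero 2 hx0)).congr_deriv ?_
  simp only [id]
  field_simp
  ring

end GreenPotential

theorem continuousOn_mul_div_add_sq {s : Set ℝ} {u : ℝ → ℝ} (hs : ∀ y ∈ s, 0 < y)
    (hu : ContinuousOn u s) : ContinuousOn (fun y => y * u y / (y + u y ^ 2)) s := by
  refine (continuousOn_id.mul hu).div (continuousOn_id.add (hu.pow 2)) fun y hy => ?_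
  have := hs y hy
  positivity

theorem opA_eq_greenPotential {lam ε Λ : ℝ} {u : ℝ → ℝ} (hε : 0 < ε)
    (hu : ContinuousOn u (Icc ε Λ)) {x : ℝ} (hx : x ∈ Icc ε Λ) :
    opA lam ε Λ u x = lam / 4 * greenPotential ε Λ (fun y => y * u y / (y + u y ^ 2)) x := by
  rw [opA, integral_kernel_eq_greenPotential hε
    (continuousOn_mul_div_add_sq (fun y hy => hε.trans_le hy.1) hu) hx]
  ring

theorem stmt_12_general (ε Λ lam : ℝ) (hε : 0 < ε)
    (u₀ : ℝ → ℝ) (hu₀ : memV lam ε Λ u₀)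
    (hfix : ∀ x ∈ Set.Icc ε Λ, u₀ x = opA lam ε Λ u₀ x) :
    ∃ u₀' u₀'' : ℝ → ℝ,
      (∀ x ∈ Set.Icc ε Λ, HasDerivWithinAt u₀ (u₀' x) (Set.Icc ε Λ) x) ∧
      (∀ x ∈ Set.Icc ε Λ, HasDerivWithinAt u₀' (u₀'' x) (Set.Icc ε Λ) x) ∧
      ∀ x ∈ Set.Icc ε Λ,
        x ^ 2 * u₀'' x + 2 * x * u₀' x
          + (lam / 4) * (x * u₀ x / (x + (u₀ x) ^ 2)) = 0 := by
  set g : ℝ → ℝ := fun y => y * u₀ y / (y + u₀ y ^ 2)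
  have hg : ContinuousOn g (Icc ε Λ) :=
    continuousOn_mul_div_add_sq (fun y hy => hε.trans_le hy.1) hu₀.1
  set F : ℝ → ℝ := fun x => ∫ y in ε..x, g y
  have hrep : ∀ x ∈ Icc ε Λ, u₀ x = lam / 4 * greenPotential ε Λ g x := fun x hx =>
    (hfix x hx).trans (opA_eq_greenPotential hε hu₀.1 hx)
  refine ⟨fun x => lam / 4 * (-F x / x ^ 2), fun x => lam / 4 * (2 * F x / x ^ 3 - g x / x ^ 2),
    fun x hx => ?_, fun x hx => ?_, fun x hx => ?_⟩
  · exact ((hasDerivWithinAt_greenPotential hε hg hx).const_mul (lam / 4)).congr hrep (hrep x hx)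
  · exact (hasDerivWithinAt_neg_integral_div_sq hε hg hx).const_mul (lam / 4)
  · have hx0 : x ≠ 0 := (hε.trans_le hx.1).ne'
    change x ^ 2 * (lam / 4 * (2 * F x / x ^ 3 - g x / x ^ 2)) + 2 * x * (lam / 4 * (-F x / x ^ 2))
      + lam / 4 * g x = 0
    field_simp
    ring

theorem stmt_12 (ε Λ lam : ℝ) (hε : 0 < ε) (hεΛ : ε < Λ) (hlam : 2 < lam)
    (hratio : ε / Λ ≤ min (1 / 16)
      (((Real.sqrt (lam ^ 2 + 128 * (lam - 2)) - lam) / 64) ^ 2))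
    (u₀ : ℝ → ℝ) (hu₀ : memV lam ε Λ u₀)
    (hfix : ∀ x ∈ Set.Icc ε Λ, u₀ x = opA lam ε Λ u₀ x) :
    ∃ u₀' u₀'' : ℝ → ℝ,
      (∀ x ∈ Set.Icc ε Λ, HasDerivWithinAt u₀ (u₀' x) (Set.Icc ε Λ) x) ∧
      (∀ x ∈ Set.Icc ε Λ, HasDerivWithinAt u₀' (u₀'' x) (Set.Icc ε Λ) x) ∧
      ∀ x ∈ Set.Icc ε Λ,
        x ^ 2 * u₀'' x + 2 * x * u₀' x
          + (lam / 4) * (x * u₀ x / (x + (u₀ x) ^ 2)) = 0 :=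
  stmt_12_general ε Λ lam hε u₀ hu₀ hfix
end
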